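/- For every positive integer L, the series G_{L,1}(q) := q/(q;q)_{L+1} − Σ_{n≥1} (q^{2n}/(1−q^n)) · C(L+n−1, n−1)_q has non-negative power series coefficients; equivalently, for every N ≥ 1, among partitions of N with largest minus smallest part at most L, those with smallest part 1 are at least as numerous as those with smallest part ≥ 2. -/

import Mathlib

/-!
Write the `n`-th summand with `k = n - 1` and an extra shift `t` of the exponent:
`f_w(L, t, N) = ∑_k [q^N] q^(t+k+1) w(t+k+1) C(L+k, k)_q`. The q-Pascal rule
`C(L+1+k, k) = C(L+k, k) + q^(L+1) C(L+k, k-1)` gives, for every weight `w`, the recursion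
`f(L+1, t, N) = f(L, t, N) + f(L+1, t+1, N-L-1)`. A family obeying it is determined by its level
`L = 0`, and it is nonnegative at every level `L ≥ 1` as soon as it is at level `1`.
For `w = 1` the family is `[q^N] q^(t+1)/(q;q)_(L+1)`, which obeys the same recursion, so the
theorem is the nonnegativity of `f_1 - f_w` for `w(m) = q^m/(1-q^m)`. At level `1`,
`C(k+1, k) = 1 + q + ⋯ + q^k`: the subtracted terms contribute at most one for each `k` with
`2(t+k+1) ≤ N`, and `k ↦ N-t-1-k` maps these injectively to the `k` with
`t+k+1 ≤ N ≤ t+2k+1`, each of which contributes exactly one.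
-/

open PowerSeries

/-- `(q^s; q)_n` as a formal power series in `q = X` over `ℚ`. -/
noncomputable def qp (s n : ℕ) : PowerSeries ℚ :=
  ∏ i ∈ Finset.range n, (1 - (X : PowerSeries ℚ) ^ (s + i))

/-- The Gaussian binomial coefficient `C(m, k)_q = (q;q)_m / ((q;q)_k (q;q)_{m-k})`. -/
noncomputable def gb (m k : ℕ) : PowerSeries ℚ := qp 1 m * (qp 1 k)⁻¹ * (qp 1 (m - k))⁻¹

open Finset

namespace PowerSeries

theorem coeff_X_pow_mul_of_constantCoeff_eq_zero {R : Type*} [Semiring R] {f : R⟦X⟧}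
    (hf : constantCoeff f = 0) (m n : ℕ) : coeff n (X ^ m * f) = coeff (n - m) f := by
  rw [coeff_X_pow_mul']
  split_ifs with h
  · rfl
  · rw [Nat.sub_eq_zero_of_le (by omega), coeff_zero_eq_constantCoeff_apply, hf]

theorem coeff_sum_range_X_pow {R : Type*} [Semiring R] (j n : ℕ) :
    coeff n (∑ r ∈ range j, X ^ r : R⟦X⟧) = if n < j then 1 else 0 := by
  simp only [map_sum, coeff_X_pow]
  rw [sum_ite_eq]
  exact if_congr mem_range rfl rfl

variable {k : Type*} [Field k]

theorem map_inv_of_constantCoeff_ne_zero {K : Type*} [DivisionRing K] (f : k⟦X⟧ →+* K)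
    {φ : k⟦X⟧} (h : constantCoeff φ ≠ 0) : f φ⁻¹ = (f φ)⁻¹ :=
  eq_inv_of_mul_eq_one_left (by rw [← map_mul, PowerSeries.inv_mul_cancel _ h, map_one])

theorem coeff_inv_one_sub_X_pow {m : ℕ} (hm : m ≠ 0) (n : ℕ) :
    coeff n ((1 - X ^ m : k⟦X⟧)⁻¹) = if m ∣ n then 1 else 0 := by
  suffices (1 - X ^ m : k⟦X⟧)⁻¹ = mk fun n => if m ∣ n then 1 else 0 by rw [this, coeff_mk]
  rw [PowerSeries.inv_eq_iff_mul_eq_one (by simp [hm])]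
  ext n
  rw [mul_sub, mul_one, map_sub, coeff_mul_X_pow', coeff_mk, coeff_one]
  rcases Nat.eq_zero_or_pos n with rfl | hn
  · simp [hm]
  · by_cases hmn : m ≤ n
    · rw [if_pos hmn, if_neg hn.ne', coeff_mk,
        if_congr (Nat.dvd_sub_iff_left hmn dvd_rfl).symm rfl rfl, sub_self]
    · have hndvd : ¬m ∣ n := fun h => hmn (Nat.le_of_dvd hn h)
      simp [hmn, hndvd, hn.ne']

theorem coeff_inv_one_sub_X_pow_mul_geom_sum_le_one [LinearOrder k] [IsStrictOrderedRing k]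
    {m j : ℕ} (hjm : j ≤ m) (n : ℕ) :
    coeff n ((1 - X ^ m : k⟦X⟧)⁻¹ * ∑ r ∈ range j, X ^ r) ≤ 1 := by
  rcases Nat.eq_zero_or_pos m with rfl | hm
  · simp [Nat.le_zero.mp hjm]
  have hterm : ∀ r ∈ range j,
      coeff n ((1 - X ^ m : k⟦X⟧)⁻¹ * X ^ r) ≤ if r = n % m then 1 else 0 := by
    intro r hr
    have hmod : r ≤ n → m ∣ n - r → r = n % m := fun h₁ h₂ =>
      (Nat.mod_eq_of_lt (by simp at hr; omega)).symm.trans ((Nat.modEq_iff_dvd' h₁).mpr h₂)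
    rw [coeff_mul_X_pow', coeff_inv_one_sub_X_pow hm.ne']
    split_ifs <;> simp_all
  calc coeff n ((1 - X ^ m : k⟦X⟧)⁻¹ * ∑ r ∈ range j, X ^ r)
      = ∑ r ∈ range j, coeff n ((1 - X ^ m : k⟦X⟧)⁻¹ * X ^ r) := by rw [mul_sum, map_sum]
    _ ≤ ∑ r ∈ range j, if r = n % m then (1 : k) else 0 := sum_le_sum hterm
    _ ≤ 1 := by rw [sum_ite_eq']; split_ifs <;> simp

end PowerSeries

local notation "ι" => algebraMap ℚ⟦X⟧ (FractionRing ℚ⟦X⟧)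

theorem qp_one_zero : qp 1 0 = 1 := prod_range_zero _

theorem qp_one_succ (n : ℕ) : qp 1 (n + 1) = qp 1 n * (1 - X ^ (n + 1)) := by
  rw [qp, prod_range_succ, add_comm 1 n]; rfl

theorem constantCoeff_qp_one (n : ℕ) : constantCoeff (qp 1 n) = 1 := by
  induction n with
  | zero => simp [qp_one_zero]
  | succ n ih => simp [qp_one_succ, ih]

theorem algebraMap_inv_qp_one (n : ℕ) : ι (qp 1 n)⁻¹ = (ι (qp 1 n))⁻¹ :=
  map_inv_of_constantCoeff_ne_zero _ (by simp [constantCoeff_qp_one])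

theorem algebraMap_qp_one_ne_zero (n : ℕ) : ι (qp 1 n) ≠ 0 :=
  (isUnit_iff_constantCoeff.mpr (by simp [constantCoeff_qp_one])).map ι |>.ne_zero

theorem algebraMap_qp_one_succ (n : ℕ) :
    ι (qp 1 (n + 1)) = ι (qp 1 n) * (1 - ι X ^ (n + 1)) := by
  simp [qp_one_succ]

theorem one_sub_algebraMap_X_pow_ne_zero (n : ℕ) : 1 - ι X ^ (n + 1) ≠ 0 :=
  right_ne_zero_of_mul (algebraMap_qp_one_succ n ▸ algebraMap_qp_one_ne_zero (n + 1))

theorem algebraMap_gb (m j : ℕ) :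
    ι (gb m j) = ι (qp 1 m) / (ι (qp 1 j) * ι (qp 1 (m - j))) := by
  rw [gb, map_mul, map_mul, algebraMap_inv_qp_one, algebraMap_inv_qp_one, div_eq_mul_inv, mul_inv,
    mul_assoc]

theorem gb_zero_right (m : ℕ) : gb m 0 = 1 := by
  apply IsFractionRing.injective ℚ⟦X⟧ (FractionRing ℚ⟦X⟧)
  rw [algebraMap_gb, Nat.sub_zero, qp_one_zero, map_one, one_mul,
    div_self (algebraMap_qp_one_ne_zero m)]

theorem gb_self (m : ℕ) : gb m m = 1 := by
  apply IsFractionRing.injective ℚ⟦X⟧ (FractionRing ℚ⟦X⟧)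
  rw [algebraMap_gb, Nat.sub_self, qp_one_zero, map_one, mul_one,
    div_self (algebraMap_qp_one_ne_zero m)]

theorem gb_succ_self (j : ℕ) : gb (j + 1) j = ∑ r ∈ range (j + 1), X ^ r := by
  apply IsFractionRing.injective ℚ⟦X⟧ (FractionRing ℚ⟦X⟧)
  have h₀ := one_sub_algebraMap_X_pow_ne_zero 0
  have hX : ι X ≠ 1 := fun h => h₀ (by simp [h])
  rw [algebraMap_gb, Nat.add_sub_cancel_left, algebraMap_qp_one_succ, map_sum,
    algebraMap_qp_one_succ 0, qp_one_zero]
  simp only [map_pow, map_one, geom_sum_eq hX]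
  have := algebraMap_qp_one_ne_zero j
  field_simp
  ring

theorem gb_pascal (m j : ℕ) :
    gb (m + j + 2) (j + 1) = gb (m + j + 1) (j + 1) + X ^ (m + 1) * gb (m + j + 1) j := by
  apply IsFractionRing.injective ℚ⟦X⟧ (FractionRing ℚ⟦X⟧)
  rw [map_add, map_mul, map_pow, algebraMap_gb, algebraMap_gb, algebraMap_gb,
    show m + j + 2 - (j + 1) = m + 1 by omega, show m + j + 1 - (j + 1) = m by omega,
    show m + j + 1 - j = m + 1 by omega, show m + j + 2 = m + j + 1 + 1 by omega,
    algebraMap_qp_one_succ (m + j + 1), algebraMap_qp_one_succ m, algebraMap_qp_one_succ j]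
  have := algebraMap_qp_one_ne_zero (m + j + 1)
  have := algebraMap_qp_one_ne_zero m
  have := algebraMap_qp_one_ne_zero j
  have := one_sub_algebraMap_X_pow_ne_zero m
  have := one_sub_algebraMap_X_pow_ne_zero j
  field_simp
  ring

theorem inv_qp_one_succ (n : ℕ) :
    (qp 1 (n + 1))⁻¹ = (qp 1 n)⁻¹ + X ^ (n + 1) * (qp 1 (n + 1))⁻¹ := by
  apply IsFractionRing.injective ℚ⟦X⟧ (FractionRing ℚ⟦X⟧)
  simp only [map_add, map_mul, map_pow, algebraMap_inv_qp_one, algebraMap_qp_one_succ]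
  have := algebraMap_qp_one_ne_zero n
  have := one_sub_algebraMap_X_pow_ne_zero n
  field_simp
  ring

structure IsPascalFamily (f : ℕ → ℕ → ℕ → ℚ) : Prop where
  apply_zero : ∀ L t, f L t 0 = 0
  apply_succ : ∀ L t N, f (L + 1) t N = f L t N + f (L + 1) (t + 1) (N - (L + 1))

namespace IsPascalFamily

variable {f g : ℕ → ℕ → ℕ → ℚ}

theorem sub (hf : IsPascalFamily f) (hg : IsPascalFamily g) : IsPascalFamily (f - g) where
  apply_zero L t := by
    show f L t 0 - g L t 0 = 0
    rw [hf.apply_zero, hg.apply_zero, sub_self]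
  apply_succ L t N := by
    simp only [Pi.sub_apply]
    rw [hf.apply_succ L t N, hg.apply_succ L t N]
    ring

theorem nonneg (hf : IsPascalFamily f) {L₀ : ℕ} (h₀ : ∀ t N, 0 ≤ f L₀ t N) :
    ∀ L, L₀ ≤ L → ∀ t N, 0 ≤ f L t N := by
  intro L hL
  induction L, hL using Nat.le_induction with
  | base => exact h₀
  | succ L _ ih =>
    intro t N
    induction N using Nat.strong_induction_on generalizing t with
    | _ N ihN =>
      rcases Nat.eq_zero_or_pos N with rfl | hN
      · rw [hf.apply_zero]
      · rw [hf.apply_succ]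
        exact add_nonneg (ih t N) (ihN _ (by omega) _)

theorem eq (hf : IsPascalFamily f) (hg : IsPascalFamily g) (h₀ : ∀ t N, f 0 t N = g 0 t N) :
    f = g := by
  funext L t N
  have h₁ := (hf.sub hg).nonneg (fun t N => by simp [h₀]) L L.zero_le t N
  have h₂ := (hg.sub hf).nonneg (fun t N => by simp [h₀]) L L.zero_le t N
  simp only [Pi.sub_apply, sub_nonneg] at h₁ h₂
  exact le_antisymm h₂ h₁

end IsPascalFamily

noncomputable def qBinomSum (w : ℕ → ℚ⟦X⟧) (L t N : ℕ) : ℚ :=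
  ∑ j ∈ range N, coeff N (X ^ (t + j + 1) * w (t + j + 1) * gb (L + j) j)

theorem qBinomSum_eq_sum_range (w : ℕ → ℚ⟦X⟧) {L t N B : ℕ} (hB : N ≤ B) :
    qBinomSum w L t N =
      ∑ j ∈ range B, coeff N (X ^ (t + j + 1) * w (t + j + 1) * gb (L + j) j) := by
  refine sum_subset (range_subset_range.2 hB) fun j _ hj => ?_
  rw [mul_assoc, coeff_X_pow_mul', if_neg (by simp at hj; omega)]

theorem qBinomSum_eq_sum_Icc (w : ℕ → ℚ⟦X⟧) (L N : ℕ) :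
    qBinomSum w L 0 N = ∑ n ∈ Icc 1 N, coeff N (X ^ n * w n * gb (L + n - 1) (n - 1)) := by
  rw [qBinomSum, ← Ico_add_one_right_eq_Icc, sum_Ico_eq_sum_range, Nat.add_sub_cancel]
  refine sum_congr rfl fun j _ => ?_
  rw [show 0 + j + 1 = 1 + j by ring, show L + (1 + j) - 1 = L + j by omega,
    Nat.add_sub_cancel_left]

theorem isPascalFamily_qBinomSum (w : ℕ → ℚ⟦X⟧) : IsPascalFamily (qBinomSum w) where
  apply_zero _ _ := sum_range_zero _
  apply_succ L t N := by
    rw [qBinomSum_eq_sum_range w (Nat.le_succ N), qBinomSum_eq_sum_range w (L := L) (Nat.le_succ N),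
      sum_range_succ', sum_range_succ', qBinomSum_eq_sum_range w (B := N) (Nat.sub_le _ _)]
    have hpascal : ∀ j ∈ range N,
        coeff N (X ^ (t + (j + 1) + 1) * w (t + (j + 1) + 1) * gb (L + 1 + (j + 1)) (j + 1)) =
          coeff N (X ^ (t + (j + 1) + 1) * w (t + (j + 1) + 1) * gb (L + (j + 1)) (j + 1)) +
          coeff (N - (L + 1)) (X ^ (t + 1 + j + 1) * w (t + 1 + j + 1) * gb (L + 1 + j) j) := by
      intro j _
      rw [show L + 1 + (j + 1) = L + j + 2 by ring, gb_pascal, mul_add, map_add,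
        show L + (j + 1) = L + j + 1 by ring, show L + 1 + j = L + j + 1 by ring,
        ← coeff_X_pow_mul_of_constantCoeff_eq_zero (m := L + 1) (by simp)]
      congr 2
      rw [show t + (j + 1) + 1 = t + 1 + j + 1 by ring]
      ring
    rw [sum_congr rfl hpascal, sum_add_distrib, gb_zero_right, gb_zero_right]
    ring

theorem isPascalFamily_coeff_X_pow_mul_inv_qp :
    IsPascalFamily fun L t N => coeff N (X ^ (t + 1) * (qp 1 (L + 1))⁻¹) where
  apply_zero L t := by simp [coeff_zero_eq_constantCoeff]
  apply_succ L t N := by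
    nth_rewrite 1 [inv_qp_one_succ (L + 1)]
    rw [mul_add, map_add, ← coeff_X_pow_mul_of_constantCoeff_eq_zero (m := L + 1) (by simp)]
    ring_nf

theorem qBinomSum_one_eq :
    qBinomSum 1 = fun L t N => coeff N (X ^ (t + 1) * (qp 1 (L + 1))⁻¹) := by
  refine (isPascalFamily_qBinomSum 1).eq isPascalFamily_coeff_X_pow_mul_inv_qp fun t N => ?_
  have hqp : qp 1 (0 + 1) = 1 - X ^ 1 := by rw [qp_one_succ, qp_one_zero, one_mul]
  simp only [qBinomSum, zero_add, gb_self, Pi.one_apply, mul_one, coeff_X_pow]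
  rw [hqp, coeff_X_pow_mul', coeff_inv_one_sub_X_pow one_ne_zero, if_pos (one_dvd _)]
  by_cases h : t + 1 ≤ N
  · rw [if_pos h, sum_eq_single_of_mem (N - (t + 1)) (by simp; omega)
      fun j _ hj => if_neg (by omega), if_pos (by omega)]
  · rw [if_neg h]
    exact sum_eq_zero fun j _ => if_neg (by omega)

theorem qBinomSum_X_pow_mul_inv_one_sub_le (t N : ℕ) :
    qBinomSum (fun m => X ^ m * (1 - X ^ m)⁻¹) 1 t N ≤ qBinomSum 1 1 t N := by
  have hupper : ∀ j ∈ range N,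
      coeff N (X ^ (t + j + 1) * (X ^ (t + j + 1) * (1 - X ^ (t + j + 1))⁻¹) * gb (1 + j) j) ≤
        if 2 * (t + j + 1) ≤ N then 1 else 0 := by
    intro j _
    rw [add_comm 1 j, gb_succ_self, ← mul_assoc, ← pow_add, ← two_mul, mul_assoc,
      coeff_X_pow_mul']
    split_ifs
    · exact coeff_inv_one_sub_X_pow_mul_geom_sum_le_one (by omega) _
    · rfl
  have hlower : ∀ j ∈ range N,
      coeff N (X ^ (t + j + 1) * (1 : ℕ → ℚ⟦X⟧) (t + j + 1) * gb (1 + j) j) =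
        if t + j + 1 ≤ N ∧ N ≤ t + 2 * j + 1 then 1 else 0 := by
    intro j _
    rw [Pi.one_apply, mul_one, add_comm 1 j, gb_succ_self, coeff_X_pow_mul', coeff_sum_range_X_pow]
    split_ifs <;> first | rfl | omega
  rw [qBinomSum, qBinomSum, sum_congr rfl hlower]
  refine (sum_le_sum hupper).trans ?_
  rw [sum_boole, sum_boole, Nat.cast_le]
  refine card_le_card_of_injOn (fun j => N - (t + 1) - j) ?_ ?_
  · intro j hj
    simp only [coe_filter, mem_range, Set.mem_ofPred_eq] at hj ⊢
    omega
  · intro i hi j hj hij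
    simp only [coe_filter, mem_range, Set.mem_ofPred_eq] at hi hj hij
    omega

/-- **Theorem 5.1.** For `L ≥ 1`, the series
`G_{L,1}(q) = q/(q;q)_{L+1} - Σ_{n ≥ 1} (q^{2n}/(1-q^n)) C(L+n-1, n-1)_q`
has non-negative coefficients. Coefficient-wise, with the sum truncated exactly at `n ≤ N`. -/
theorem stmt14 (L : ℕ) (hL : 1 ≤ L) (N : ℕ) :
    0 ≤ coeff N ((X : PowerSeries ℚ) * (qp 1 (L + 1))⁻¹)
        - ∑ n ∈ Finset.Icc 1 N,
            coeff N ((X : PowerSeries ℚ) ^ (2 * n) * (1 - X ^ n)⁻¹ * gb (L + n - 1) (n - 1)) := by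
  have hmain : coeff N ((X : ℚ⟦X⟧) * (qp 1 (L + 1))⁻¹) = qBinomSum 1 L 0 N := by
    simp [qBinomSum_one_eq]
  have hsum : ∑ n ∈ Icc 1 N,
      coeff N ((X : ℚ⟦X⟧) ^ (2 * n) * (1 - X ^ n)⁻¹ * gb (L + n - 1) (n - 1)) =
      qBinomSum (fun m => X ^ m * (1 - X ^ m)⁻¹) L 0 N := by
    rw [qBinomSum_eq_sum_Icc]
    refine sum_congr rfl fun n _ => ?_
    rw [two_mul, pow_add, mul_assoc (X ^ n)]
  rw [hmain, hsum]
  exact ((isPascalFamily_qBinomSum 1).sub (isPascalFamily_qBinomSum _)).nonneg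
    (fun t N => sub_nonneg.2 (qBinomSum_X_pow_mul_inv_one_sub_le t N)) L hL 0 N
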